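/- An R-module M is semisimple if and only if M is retractable and dual Baer. -/

import Mathlib

universe u v

/-- `M` is retractable: there is a nonzero homomorphism `M → N`
for every nonzero submodule `N ≤ M`. -/
def Retractable (R : Type u) [Ring R] (M : Type v) [AddCommGroup M]
    [Module R M] : Prop :=
  ∀ N : Submodule R M, N ≠ ⊥ → ∃ f : Module.End R M, LinearMap.range f ≤ N ∧ f ≠ 0

/-- `M` is a dual Baer module: for every submodule `N` of `M`, the right ideal
`Hom(M,N)` of `End(M)` is generated by an idempotent. -/
def IsDualBaerModule (R : Type u) [Ring R] (M : Type v) [AddCommGroup M]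
    [Module R M] : Prop :=
  ∀ N : Submodule R M, ∃ e : Module.End R M, IsIdempotentElem e ∧
    {f : Module.End R M | LinearMap.range f ≤ N} = Set.range fun s => e * s

/-!
Both sides say that every submodule `N` is the image of an idempotent endomorphism.
Semisimple modules have the projections onto complemented submodules. Conversely, if
`Hom(M, N) = e End(M)` with `e² = e`, then `range e ≤ N`, and every map into `N ⊓ ker e`
is both fixed and killed by `e`; retractability makes `N ⊓ ker e = 0`, and the modular law
applied to `range e ⊕ ker e = M` gives `N = range e`.
-/

open LinearMap

variable {R : Type u} [Ring R] {M : Type v} [AddCommGroup M] [Module R M]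

theorem isSemisimpleModule_iff_forall_exists_isIdempotentElem_range_eq :
    IsSemisimpleModule R M ↔
      ∀ N : Submodule R M, ∃ e : Module.End R M, IsIdempotentElem e ∧ range e = N := by
  rw [isSemisimpleModule_iff]
  constructor
  · intro _ N
    obtain ⟨q, hq⟩ := exists_isCompl N
    exact ⟨N.projection q hq, Submodule.isIdempotentElem_projection hq,
      Submodule.range_projection hq⟩
  · intro h
    refine ⟨fun N => ?_⟩
    obtain ⟨e, he, rfl⟩ := h N
    exact ⟨ker e, he.isCompl⟩

theorem IsIdempotentElem.setOf_range_le_range_eq {e : Module.End R M} (he : IsIdempotentElem e) :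
    {f : Module.End R M | range f ≤ range e} = Set.range fun s => e * s := by
  ext f
  constructor
  · intro hf
    exact ⟨f, (he.comp_eq_right_iff f).2 hf⟩
  · rintro ⟨s, rfl⟩
    exact range_comp_le_range s e

theorem Retractable.range_eq_of_setOf_range_le_eq (hM : Retractable R M) {N : Submodule R M}
    {e : Module.End R M} (he : IsIdempotentElem e)
    (hN : {f : Module.End R M | range f ≤ N} = Set.range fun s => e * s) :
    range e = N := by
  have mul_eq_self : ∀ f : Module.End R M, range f ≤ N → e * f = f := by
    intro f hf
    obtain ⟨s, rfl⟩ : f ∈ Set.range fun s => e * s := hN ▸ hf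
    rw [← mul_assoc, he.eq]
  have range_le : range e ≤ N := show e ∈ {f | range f ≤ N} from hN ▸ ⟨1, mul_one e⟩
  have ker_inf : ker e ⊓ N = ⊥ := by
    by_contra hne
    obtain ⟨f, hf, hf0⟩ := hM _ hne
    apply hf0
    rw [← mul_eq_self f (hf.trans inf_le_right)]
    ext x
    exact (hf.trans inf_le_left) (mem_range_self f x)
  calc range e = range e ⊔ ker e ⊓ N := by rw [ker_inf, sup_bot_eq]
    _ = (range e ⊔ ker e) ⊓ N := (sup_inf_assoc_of_le _ range_le).symm
    _ = N := by rw [he.isCompl.sup_eq_top, top_inf_eq]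

theorem stmt16 (R : Type u) [Ring R] (M : Type v) [AddCommGroup M] [Module R M] :
    IsSemisimpleModule R M ↔ Retractable R M ∧ IsDualBaerModule R M := by
  rw [isSemisimpleModule_iff_forall_exists_isIdempotentElem_range_eq]
  constructor
  · intro h
    refine ⟨fun N hN => ?_, fun N => ?_⟩ <;> obtain ⟨e, he, rfl⟩ := h N
    · exact ⟨e, le_rfl, fun he0 => hN (he0 ▸ range_zero)⟩
    · exact ⟨e, he, he.setOf_range_le_range_eq⟩
  · rintro ⟨hM, hdb⟩ N
    obtain ⟨e, he, hN⟩ := hdb N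
    exact ⟨e, he, hM.range_eq_of_setOf_range_le_eq he hN⟩
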